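/- arXiv:2307.07823 — 7 statements merged into one kernel-verified Lean document; each statement's English description precedes it below -/
import Mathlib

section
/- Let K be a field of characteristic zero, let n ≥ 2 and d ≥ 2 be integers, let A = K[x_1,…,x_n] be the polynomial algebra, and let A_0 be the Veronese subalgebra of A of degree d. Then every K-derivation D : A_0 → A_0 extends uniquely to a K-derivation S : A → A (i.e., there is exactly one K-derivation S of A whose restriction to A_0 equals D), and this unique extension S is d-graded, i.e., S(x_i) lies in the component A_1 for every i = 1,…,n. -/
set_option synthInstance.maxHeartbeats 1000000
set_option maxHeartbeats 1000000

open MvPolynomial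

/-- Total degree of a monomial exponent vector. -/
def mdeg {n : ℕ} (m : Fin n →₀ ℕ) : ℕ := m.sum fun _ k => k

lemma mdeg_add {n : ℕ} (a b : Fin n →₀ ℕ) : mdeg (a + b) = mdeg a + mdeg b :=
  Finsupp.sum_add_index' (fun _ => rfl) (fun _ _ _ => rfl)

/-- The `i`-th component `A_i` of the `ℤ/d`-grading of `K[x_1,…,x_n]`:
polynomials all of whose monomials have total degree ≡ i (mod d). -/
def comp (K : Type) [Field K] (n d i : ℕ) : Submodule K (MvPolynomial (Fin n) K) where
  carrier := {f | ∀ m ∈ f.support, mdeg m % d = i % d}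
  add_mem' := by
    intro f g hf hg m hm
    rcases Finset.mem_union.mp (MvPolynomial.support_add hm) with h | h
    · exact hf m h
    · exact hg m h
  zero_mem' := by intro m hm; simp at hm
  smul_mem' := by
    intro c f hf m hm
    exact hf m (Finsupp.support_smul hm)

/-- The Veronese subalgebra `A_0` of degree `d`. -/
noncomputable def veronese (K : Type) [Field K] (n d : ℕ) : Subalgebra K (MvPolynomial (Fin n) K) :=
  (comp K n d 0).toSubalgebra
    (by
      classical
      intro m hm
      rw [show (1 : MvPolynomial (Fin n) K) = MvPolynomial.monomial 0 1 from rfl,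
        MvPolynomial.support_monomial] at hm
      simp only [one_ne_zero, if_false, Finset.mem_singleton] at hm
      subst hm
      simp [mdeg])
    (by
      intro f g hf hg m hm
      obtain ⟨a, ha, b, hb, rfl⟩ := Finset.mem_add.mp (MvPolynomial.support_mul _ _ hm)
      rw [mdeg_add, Nat.add_mod, hf a ha, hg b hb]
      simp)

lemma X_pow_mem (K : Type) [Field K] (n d : ℕ) (i : Fin n) :
    (MvPolynomial.X i : MvPolynomial (Fin n) K) ^ d ∈ veronese K n d := by
  classical
  intro m hm
  rw [MvPolynomial.X_pow_eq_monomial, MvPolynomial.support_monomial] at hm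
  simp only [one_ne_zero, if_false, Finset.mem_singleton] at hm
  subst hm
  simp [mdeg, Finsupp.sum_single_index, Nat.mod_self]

/-!
Applying `D` to the relation `(xᵢ xⱼ^(d-1))^d = xᵢ^d (xⱼ^d)^(d-1)` in `A₀` (with `j ≠ i`)
shows that `xᵢ^(d-1)` divides `D (xᵢ^d)`, say `D (xᵢ^d) = xᵢ^(d-1) qᵢ`, because `xᵢ` is prime
and does not divide `xⱼ`. The derivation `S` of `A` with `S xᵢ = qᵢ / d` then agrees with `D`
on every `xᵢ^d`, hence on every monomial `M` of degree `d`: `M^d` is a product of the `xᵢ^d`,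
and `d M^(d-1)` can be cancelled in a domain of characteristic zero. These monomials generate
`A₀`, so `S` extends `D`. The same cancellation shows that a derivation of `A` is determined
by its values on the `xᵢ^d`, which gives uniqueness, and `S xᵢ ∈ A₁` because
`xᵢ^(d-1) qᵢ ∈ A₀`.
-/

namespace Derivation

variable {R B A : Type*} [CommSemiring R] [CommSemiring B] [CommRing A] [IsDomain A] [CharZero A]
  [Algebra R B] [Algebra B A] [Module R A]

theorem eq_of_map_pow_eq {D₁ D₂ : Derivation R B A} {a : B} {k : ℕ} (hk : k ≠ 0)
    (ha : algebraMap B A a ≠ 0) (h : D₁ (a ^ k) = D₂ (a ^ k)) : D₁ a = D₂ a := by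
  rw [leibniz_pow, leibniz_pow] at h
  refine mul_left_cancel₀ (pow_ne_zero (k - 1) ha) ?_
  simpa only [Algebra.smul_def, map_pow] using smul_right_injective A hk h

end Derivation

theorem Subalgebra.adjoin_val_preimage_eq_top {R A : Type*} [CommSemiring R] [Semiring A]
    [Algebra R A] {B : Subalgebra R A} {T : Set A} (h : Algebra.adjoin R T = B) :
    Algebra.adjoin R (B.val ⁻¹' T) = ⊤ := by
  apply Subalgebra.map_injective (f := B.val) Subtype.val_injective
  rw [AlgHom.map_adjoin, Algebra.map_top, Subalgebra.range_val,
    Set.image_preimage_eq_of_subset fun x hx => ⟨⟨x, h ▸ Algebra.subset_adjoin hx⟩, rfl⟩,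
    h]

theorem MvPolynomial.derivation_eq_of_map_X_pow_eq {σ R : Type*} [CommRing R] [IsDomain R]
    [CharZero R] {D₁ D₂ : Derivation R (MvPolynomial σ R) (MvPolynomial σ R)} {k : ℕ}
    (hk : k ≠ 0) (h : ∀ i, D₁ (X i ^ k) = D₂ (X i ^ k)) : D₁ = D₂ :=
  derivation_ext fun i => Derivation.eq_of_map_pow_eq hk (X_ne_zero i) (h i)

theorem MvPolynomial.mkDerivation_X_pow_eq {σ K : Type*} [Field K] [CharZero K] {k : ℕ}
    (hk : k ≠ 0) (q : σ → MvPolynomial σ K) (i : σ) :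
    mkDerivation K (fun i => (k : K)⁻¹ • q i) (X i ^ k) = X i ^ (k - 1) * q i := by
  rw [Derivation.leibniz_pow, mkDerivation_X, smul_eq_mul, mul_smul_comm,
    ← Nat.cast_smul_eq_nsmul K, smul_smul, mul_inv_cancel₀ (Nat.cast_ne_zero.mpr hk), one_smul]

theorem MvPolynomial.monomial_pow_eq_prod_X_pow_pow {σ K : Type*} [CommSemiring K]
    (m : σ →₀ ℕ) (k : ℕ) :
    (monomial m (1 : K)) ^ k = ∏ i ∈ m.support, (X i ^ k) ^ m i := by
  rw [monomial_eq, C_1, one_mul, Finsupp.prod, ← Finset.prod_pow]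
  exact Finset.prod_congr rfl fun i _ => pow_right_comm _ _ _

lemma mdeg_eq_degree {n : ℕ} (m : Fin n →₀ ℕ) : mdeg m = m.degree := rfl

section

variable {K : Type} [Field K] {n d : ℕ}

lemma monomial_mem_comp {m : Fin n →₀ ℕ} {i : ℕ} (c : K) (h : mdeg m % d = i % d) :
    monomial m c ∈ comp K n d i := by
  classical
  intro m' hm'
  rw [Finset.mem_singleton.mp (support_monomial_subset hm')]
  exact h

lemma monomial_mem_veronese {m : Fin n →₀ ℕ} (c : K) (h : d ∣ mdeg m) :
    monomial m c ∈ veronese K n d :=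
  monomial_mem_comp c (by simpa using Nat.mod_eq_zero_of_dvd h)

lemma mem_comp_of_X_pow_mul_mem {i : Fin n} {k j l : ℕ} {f : MvPolynomial (Fin n) K}
    (h : X i ^ k * f ∈ comp K n d l) (hkl : (k + j) % d = l % d) : f ∈ comp K n d j := by
  intro m hm
  have hmem : Finsupp.single i k + m ∈ (X i ^ k * f).support := by
    rwa [X_pow_eq_monomial, mem_support_iff, coeff_monomial_mul, one_mul, ← mem_support_iff]
  have hdeg := h _ hmem
  rw [mdeg_add, mdeg_eq_degree (Finsupp.single i k), Finsupp.degree_single, ← hkl] at hdeg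
  exact Nat.ModEq.add_left_cancel' k hdeg

lemma monomial_mem_adjoin_of_mdeg_eq_mul (k : ℕ) (m : Fin n →₀ ℕ) (c : K)
    (hm : mdeg m = d * k) :
    monomial m c ∈ Algebra.adjoin K ((monomial · (1 : K)) '' {m | mdeg m = d}) := by
  induction k generalizing m with
  | zero =>
    rw [mul_zero, mdeg_eq_degree, Finsupp.degree_eq_zero_iff] at hm
    rw [hm, ← C_apply]
    exact Subalgebra.algebraMap_mem _ c
  | succ k ih =>
    have hdm : d ≤ m.degree := by
      rw [← mdeg_eq_degree, hm]
      exact Nat.le_mul_of_pos_right d k.succ_pos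
    obtain ⟨a, ham, ha⟩ := Finsupp.exists_le_degree_eq m d hdm
    obtain ⟨b, rfl⟩ := le_iff_exists_add.mp ham
    rw [← one_mul c, ← monomial_mul]
    refine Subalgebra.mul_mem _ (Algebra.subset_adjoin ⟨a, ha, rfl⟩) (ih b ?_)
    rw [mdeg_add, mdeg_eq_degree a, ha] at hm
    linarith

lemma adjoin_monomial_eq_veronese :
    Algebra.adjoin K ((monomial · (1 : K)) '' {m : Fin n →₀ ℕ | mdeg m = d}) =
      veronese K n d := by
  refine le_antisymm (Algebra.adjoin_le ?_) fun f hf => ?_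
  · rintro _ ⟨m, hm, rfl⟩
    exact monomial_mem_veronese 1 (dvd_of_eq hm.symm)
  · rw [f.as_sum]
    refine Subalgebra.sum_mem _ fun m hm => ?_
    obtain ⟨k, hk⟩ := Nat.dvd_of_mod_eq_zero (hf m hm)
    exact monomial_mem_adjoin_of_mdeg_eq_mul k m _ hk

lemma X_mul_X_pow_pred_mem_veronese (hd : 0 < d) (i j : Fin n) :
    X i * X j ^ (d - 1) ∈ veronese K n d := by
  rw [X_pow_eq_monomial, X, monomial_mul, one_mul]
  refine monomial_mem_veronese 1 ⟨1, ?_⟩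
  rw [mdeg_add, mdeg_eq_degree, mdeg_eq_degree, Finsupp.degree_single, Finsupp.degree_single]
  omega

lemma X_pow_pred_dvd_map_X_pow (hd : 0 < d)
    (E : Derivation K (veronese K n d) (MvPolynomial (Fin n) K)) {i j : Fin n} (hij : i ≠ j) :
    X i ^ (d - 1) ∣ E ⟨X i ^ d, X_pow_mem K n d i⟩ := by
  set u : veronese K n d := ⟨X i ^ d, X_pow_mem K n d i⟩
  set v : veronese K n d := ⟨X j ^ d, X_pow_mem K n d j⟩
  set w : veronese K n d := ⟨_, X_mul_X_pow_pred_mem_veronese hd i j⟩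
  have hrel : w ^ d = u * v ^ (d - 1) := by
    apply Subtype.ext
    simp only [w, u, v, SubmonoidClass.coe_pow, MulMemClass.coe_mul]
    ring
  have key : (X j ^ d) ^ (d - 1) * E u =
      (d : MvPolynomial (Fin n) K) * (X i * X j ^ (d - 1)) ^ (d - 1) * E w
        - X i ^ d * (((d - 1 : ℕ) : MvPolynomial (Fin n) K) * (X j ^ d) ^ (d - 1 - 1) * E v) := by
    have h := congrArg E hrel
    rw [Derivation.leibniz_pow, Derivation.leibniz, Derivation.leibniz_pow] at h
    simp only [Subalgebra.smul_def, smul_eq_mul, nsmul_eq_mul, SubmonoidClass.coe_pow] at h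
    linear_combination -h
  have hdvd : X i ^ (d - 1) ∣ X j ^ (d * (d - 1)) * E u := by
    rw [pow_mul, key]
    refine dvd_sub (Dvd.dvd.mul_right (Dvd.dvd.mul_left ?_ _) _) (Dvd.dvd.mul_right ?_ _)
    · rw [mul_pow]
      exact dvd_mul_right _ _
    · exact pow_dvd_pow _ (Nat.sub_le d 1)
  refine X_prime.pow_dvd_of_dvd_mul_left _ (fun h => hij ?_) hdvd
  exact X_dvd_X.mp (X_prime.dvd_of_dvd_pow h)

lemma derivation_veronese_ext [CharZero K] (hd : d ≠ 0)
    {E₁ E₂ : Derivation K (veronese K n d) (MvPolynomial (Fin n) K)}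
    (h : ∀ i, E₁ ⟨X i ^ d, X_pow_mem K n d i⟩ = E₂ ⟨X i ^ d, X_pow_mem K n d i⟩) :
    E₁ = E₂ := by
  set u : Fin n → veronese K n d := fun i => ⟨X i ^ d, X_pow_mem K n d i⟩
  have hu : Set.EqOn E₁ E₂ (Algebra.adjoin K (Set.range u)) :=
    Derivation.eqOn_adjoin (Set.forall_mem_range.2 h)
  refine Derivation.ext_of_adjoin_eq_top _
    (Subalgebra.adjoin_val_preimage_eq_top adjoin_monomial_eq_veronese) ?_
  rintro M ⟨m, -, hM : monomial m 1 = (M : MvPolynomial (Fin n) K)⟩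
  have hMd : M ^ d = ∏ i ∈ m.support, u i ^ m i := by
    apply Subtype.ext
    rw [SubmonoidClass.coe_pow, ← hM, monomial_pow_eq_prod_X_pow_pow,
      SubmonoidClass.coe_finsetProd]
    rfl
  refine Derivation.eq_of_map_pow_eq hd ?_ (hu ?_)
  · change (M : MvPolynomial (Fin n) K) ≠ 0
    rw [← hM]
    exact monomial_eq_zero.not.mpr one_ne_zero
  · rw [hMd]
    exact Subalgebra.prod_mem _ fun i _ =>
      Subalgebra.pow_mem _ (Algebra.subset_adjoin (Set.mem_range_self i)) _

end

/-- every `K`-derivation of the Veronese subalgebra `A₀` of degree `d` of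
`A = K[x₁,…,xₙ]` (char `K` = 0, `n ≥ 2`, `d ≥ 2`) extends uniquely to a `K`-derivation of `A`,
and this unique extension is `d`-graded, i.e. sends each `xᵢ` into the component `A₁`. -/
theorem stmt0 (K : Type) [Field K] [CharZero K] (n d : ℕ) (hn : 2 ≤ n) (hd : 2 ≤ d)
    (D : Derivation K (veronese K n d) (veronese K n d)) :
    (∃! S : Derivation K (MvPolynomial (Fin n) K) (MvPolynomial (Fin n) K),
        ∀ a : veronese K n d, S ↑a = ↑(D a)) ∧
    (∀ S : Derivation K (MvPolynomial (Fin n) K) (MvPolynomial (Fin n) K),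
        (∀ a : veronese K n d, S ↑a = ↑(D a)) →
        ∀ i : Fin n, S (MvPolynomial.X i) ∈ comp K n d 1) := by
  have hd0 : d ≠ 0 := by omega
  have : Nontrivial (Fin n) := Fin.nontrivial_iff_two_le.mpr hn
  set u : Fin n → veronese K n d := fun i => ⟨X i ^ d, X_pow_mem K n d i⟩
  have hdvd (i : Fin n) : X i ^ (d - 1) ∣ (D (u i) : MvPolynomial (Fin n) K) :=
    let ⟨_, hj⟩ := exists_ne i
    X_pow_pred_dvd_map_X_pow (by omega) ((Algebra.linearMap _ _).compDer D) hj.symm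
  choose q hq using hdvd
  set S := mkDerivation K fun i => (d : K)⁻¹ • q i
  have hSu (i : Fin n) : S (X i ^ d) = D (u i) :=
    (mkDerivation_X_pow_eq hd0 q i).trans (hq i).symm
  have hext (a : veronese K n d) : S a = D a :=
    Derivation.congr_fun (derivation_veronese_ext (E₁ := S.compAlgebraMap _)
      (E₂ := (Algebra.linearMap _ _).compDer D) hd0 hSu) a
  have huniq (S' : Derivation K (MvPolynomial (Fin n) K) (MvPolynomial (Fin n) K))
      (hS' : ∀ a : veronese K n d, S' a = D a) : S' = S :=
    derivation_eq_of_map_X_pow_eq hd0 fun i => (hS' (u i)).trans (hSu i).symm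
  refine ⟨⟨S, hext, huniq⟩, fun S' hS' i => ?_⟩
  rw [huniq S' hS', mkDerivation_X]
  refine Submodule.smul_mem _ _ (mem_comp_of_X_pow_mul_mem (hq i ▸ (D (u i)).2) ?_)
  simp [Nat.sub_add_cancel (by omega : 1 ≤ d)]
end

section
/- Let K be a field of characteristic zero, let n ≥ 2 and d ≥ 2 be integers, let A = K[x_1,…,x_n] be the polynomial algebra, and let A_0 be the Veronese subalgebra of A of degree d. Then every locally nilpotent K-derivation D : A_0 → A_0 is induced by a locally nilpotent d-graded K-derivation of A; that is, there exists a K-derivation S : A → A such that S(x_i) ∈ A_1 for all i, S restricted to A_0 equals D, and for every f ∈ A there is a natural number m with S^m(f) = 0. -/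
set_option synthInstance.maxHeartbeats 1000000
set_option maxHeartbeats 1000000

open MvPolynomial

/-!
Write `W i = X i ^ d`. Applying `D` to `(X i * X j ^ (d - 1)) ^ d = W i * W j ^ (d - 1)` with
`j ≠ i` shows that `X i ^ (d - 1)` divides `D (W i)`, so `D (W i) = d • X i ^ (d - 1) • s i`,
and `s i ∈ A_1` by degree count; `S` is the derivation with `S (X i) = s i`. Then `S` and `D`
agree on the `W i`, hence on `u ^ d` for every monomial `u ∈ A_0`, hence on `u` (cancel
`d • u ^ (d - 1)`), hence on `A_0`.

`S` preserves `A_1`, and `f ^ d ∈ A_0` for `f ∈ A_1`. In a domain of characteristic zero the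
degree function `ν` of `S` is additive on products, and `S (f ^ d) = d • f ^ (d - 1) * S f`;
comparing the two expressions for `ν ((f ^ (d - 1) * S f) ^ d)` gives
`ν ((S f) ^ d) < ν (f ^ d)`, so by induction `S` is locally nilpotent on `A_1`, which contains
every `X i`.
-/

open Finset

namespace Derivation

section Iterate

variable {R A : Type*} [CommSemiring R] [CommSemiring A] [Algebra R A] (S : Derivation R A A)

theorem iterate_apply_mul (n : ℕ) (a b : A) :
    S^[n] (a * b) = ∑ ij ∈ antidiagonal n, n.choose ij.1 • (S^[ij.1] a * S^[ij.2] b) := by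
  induction n with
  | zero => simp
  | succ n ih =>
    rw [sum_antidiagonal_choose_succ_nsmul (fun i j => S^[i] a * S^[j] b) n]
    simp only [Function.iterate_succ_apply', ih, map_sum, map_nsmul, leibniz, smul_eq_mul,
      smul_add, sum_add_distrib]
    congr 1
    refine sum_congr rfl fun ⟨i, j⟩ hij => ?_
    rw [n.choose_symm_of_eq_add (HasAntidiagonal.mem_antidiagonal.1 hij).symm, mul_comm]

variable {S}

theorem iterate_eq_zero_of_le {a : A} {p q : ℕ} (h : S^[p] a = 0) (hpq : p ≤ q) :
    S^[q] a = 0 := by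
  obtain ⟨r, rfl⟩ := Nat.exists_eq_add_of_le hpq
  rw [add_comm, Function.iterate_add_apply, h, iterate_map_zero]

theorem iterate_mul_eq_zero {a b : A} {p q n : ℕ} (ha : S^[p] a = 0) (hb : S^[q] b = 0)
    (hn : p + q ≤ n + 1) : S^[n] (a * b) = 0 := by
  rw [iterate_apply_mul]
  refine sum_eq_zero fun ⟨i, j⟩ hij => ?_
  rw [HasAntidiagonal.mem_antidiagonal] at hij
  rcases le_or_gt p i with hi | hi
  · rw [iterate_eq_zero_of_le ha hi, zero_mul, smul_zero]
  · rw [iterate_eq_zero_of_le hb (by omega : q ≤ j), mul_zero, smul_zero]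

variable (S) in
def nil : Subalgebra R A where
  carrier := {a | ∃ m, S^[m] a = 0}
  mul_mem' := fun ⟨p, hp⟩ ⟨q, hq⟩ => ⟨p + q, iterate_mul_eq_zero hp hq (by omega)⟩
  add_mem' := fun {a b} ⟨p, hp⟩ ⟨q, hq⟩ => ⟨max p q, by
    rw [iterate_map_add, iterate_eq_zero_of_le hp (le_max_left p q),
      iterate_eq_zero_of_le hq (le_max_right p q), add_zero]⟩
  algebraMap_mem' r := ⟨1, S.map_algebraMap r⟩

theorem mem_nil {a : A} : a ∈ S.nil ↔ ∃ m, S^[m] a = 0 := Iff.rfl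

variable (S) in
/-- `ν_S(a) = p` for the degree function `ν_S` of a derivation. -/
def IsDegree (a : A) (p : ℕ) : Prop := S^[p] a ≠ 0 ∧ S^[p + 1] a = 0

theorem exists_isDegree {a : A} (ha : a ≠ 0) (h : a ∈ S.nil) : ∃ p, S.IsDegree a p := by
  obtain ⟨m, hm⟩ := h
  induction m with
  | zero => exact absurd hm ha
  | succ m ih => exact (em (S^[m] a = 0)).elim ih fun h => ⟨m, h, hm⟩

theorem IsDegree.unique {a : A} {p q : ℕ} (hp : S.IsDegree a p) (hq : S.IsDegree a q) :
    p = q := by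
  by_contra hpq
  rcases lt_or_gt_of_ne hpq with h | h
  · exact hq.1 (iterate_eq_zero_of_le hp.2 h)
  · exact hp.1 (iterate_eq_zero_of_le hq.2 h)

theorem IsDegree.of_apply {a : A} {p : ℕ} (h : S.IsDegree (S a) p) : S.IsDegree a (p + 1) := by
  simpa only [IsDegree, Function.iterate_succ_apply] using h

end Iterate

section Domain

variable {R A : Type*} [CommSemiring R] [CommRing A] [IsDomain A] [CharZero A] [Algebra R A]
  {S : Derivation R A A}

theorem IsDegree.nsmul {a : A} {p k : ℕ} (h : S.IsDegree a p) (hk : k ≠ 0) :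
    S.IsDegree (k • a) p := by
  simp only [IsDegree, iterate_map_nsmul, ne_eq, smul_eq_zero, hk, false_or]
  exact h

theorem IsDegree.mul {a b : A} {p q : ℕ} (ha : S.IsDegree a p) (hb : S.IsDegree b q) :
    S.IsDegree (a * b) (p + q) := by
  refine ⟨?_, iterate_mul_eq_zero ha.2 hb.2 (by omega)⟩
  rw [iterate_apply_mul, sum_eq_single_of_mem (p, q) (HasAntidiagonal.mem_antidiagonal.2 rfl)]
  · exact smul_ne_zero (Nat.choose_pos (Nat.le_add_right p q)).ne' (mul_ne_zero ha.1 hb.1)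
  · rintro ⟨i, j⟩ hij hne
    rw [HasAntidiagonal.mem_antidiagonal] at hij
    rcases lt_trichotomy i p with hi | rfl | hi
    · rw [iterate_eq_zero_of_le hb.2 (by omega : q + 1 ≤ j), mul_zero, smul_zero]
    · exact (hne (Prod.ext rfl (by omega))).elim
    · rw [iterate_eq_zero_of_le ha.2 hi, zero_mul, smul_zero]

theorem IsDegree.pow {a : A} {p : ℕ} (h : S.IsDegree a p) (k : ℕ) :
    S.IsDegree (a ^ k) (k * p) := by
  induction k with
  | zero => simp [IsDegree]
  | succ k ih => simpa only [pow_succ, add_mul, one_mul] using ih.mul h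

theorem subset_nil_of_pow_mem_nil {P : Set A} {k : ℕ} (hk : k ≠ 0)
    (hSP : ∀ f ∈ P, S f ∈ P) (hP : ∀ f ∈ P, f ^ k ∈ S.nil) : P ⊆ S.nil := by
  suffices h : ∀ p, ∀ f ∈ P, S.IsDegree (f ^ k) p → f ∈ S.nil by
    intro f hf
    by_cases hf0 : f = 0
    · exact hf0 ▸ S.nil.zero_mem
    obtain ⟨p, hp⟩ := exists_isDegree (pow_ne_zero k hf0) (hP f hf)
    exact h p f hf hp
  intro p
  induction p using Nat.strong_induction_on with
  | _ p ih =>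
  intro f hf hp
  by_cases hSf : S f = 0
  · exact ⟨1, hSf⟩
  have hf0 : f ≠ 0 := by rintro rfl; simp [zero_pow hk, IsDegree] at hp
  obtain ⟨q, hq⟩ := exists_isDegree (pow_ne_zero k hSf) (hP (S f) (hSP f hf))
  -- `g = f ^ (k - 1) * S f` is `S (f ^ k) / k`; comparing the degrees of `g ^ k` gives `q < p`
  set g := f ^ (k - 1) * S f with hg_def
  have hSfk : S (f ^ k) = k • g := by rw [leibniz_pow, smul_eq_mul]
  obtain ⟨r, hr⟩ : ∃ r, S.IsDegree g r := by
    refine exists_isDegree (mul_ne_zero (pow_ne_zero _ hf0) hSf) ⟨p, ?_⟩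
    have h := hp.2
    rwa [Function.iterate_succ_apply, hSfk, iterate_map_nsmul, smul_eq_zero,
      or_iff_right hk] at h
  have hpr : p = r + 1 := hp.unique (hSfk ▸ hr.nsmul hk).of_apply
  have hgk : g ^ k = (f ^ k) ^ (k - 1) * S f ^ k := by
    rw [hg_def, mul_pow, ← pow_mul, ← pow_mul, mul_comm (k - 1) k]
  have hdeg : k * r = (k - 1) * p + q := (hr.pow k).unique (hgk ▸ (hp.pow (k - 1)).mul hq)
  have hqp : q < p := by
    obtain ⟨k, rfl⟩ := Nat.exists_eq_add_one_of_ne_zero hk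
    subst hpr
    rw [add_tsub_cancel_right] at hdeg
    nlinarith
  obtain ⟨m, hm⟩ := ih q hqp (S f) (hSP f hf) hq
  exact ⟨m + 1, hm⟩

end Domain

theorem apply_eq_of_apply_pow_eq {R B M : Type*} [CommSemiring R] [CommRing B]
    [IsDomain B] [AddCommGroup M] [Algebra R B] [Module B M] [Module R M]
    [Module.IsTorsionFree B M] [Module.IsTorsionFree ℕ M] (D₁ D₂ : Derivation R B M) {a : B}
    {k : ℕ} (hk : k ≠ 0) (h : D₁ (a ^ k) = D₂ (a ^ k)) : D₁ a = D₂ a := by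
  rcases eq_or_ne a 0 with rfl | ha
  · simp
  rw [leibniz_pow, leibniz_pow] at h
  exact smul_right_injective M (pow_ne_zero (k - 1) ha) (smul_right_injective M hk h)

end Derivation

namespace MvPolynomial.IsWeightedHomogeneous

variable {R σ M : Type*} [CommSemiring R] {w : σ → M} {φ : MvPolynomial σ R}

theorem derivation_apply [AddCommMonoid M] {m : M}
    (S : Derivation R (MvPolynomial σ R) (MvPolynomial σ R))
    (hS : ∀ i, (S (X i)).IsWeightedHomogeneous w (w i)) (hφ : φ.IsWeightedHomogeneous w m) :
    (S φ).IsWeightedHomogeneous w m := by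
  have hSmk : S = mkDerivation R fun i => S (X i) :=
    derivation_ext fun i => (mkDerivation_X R (fun i => S (X i)) i).symm
  induction hφ using IsWeightedHomogeneous.induction_on with
  | zero => simpa using isWeightedHomogeneous_zero R w m
  | add p q _ _ hp hq => simpa using hp.add hq
  | monomial v r hv =>
    rw [hSmk, mkDerivation_monomial, smul_eq_C_mul]
    refine .C_mul (IsWeightedHomogeneous.sum _ _ m fun i hi => ?_) r
    dsimp only
    have hvi : Finsupp.single i 1 ≤ v :=
      Finsupp.single_le_iff.2 (Nat.one_le_iff_ne_zero.2 (Finsupp.mem_support_iff.1 hi))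
    rw [smul_eq_mul, ← hv, ← tsub_add_cancel_of_le hvi, map_add, Finsupp.weight_single,
      one_smul, add_tsub_cancel_right]
    exact (isWeightedHomogeneous_monomial w _ _ rfl).mul (hS i)

theorem of_X_pow_mul [AddCancelCommMonoid M] {m : M} {i : σ} {k : ℕ}
    (h : (X i ^ k * φ).IsWeightedHomogeneous w (k • w i + m)) :
    φ.IsWeightedHomogeneous w m := by
  intro v hv
  have hcoeff : coeff (Finsupp.single i k + v) (X i ^ k * φ) ≠ 0 := by
    rwa [X_pow_eq_monomial, coeff_monomial_mul, one_mul]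
  have := h hcoeff
  rw [map_add, Finsupp.weight_single] at this
  exact add_left_cancel this

end MvPolynomial.IsWeightedHomogeneous

section Veronese

variable {K : Type} [Field K] {n d : ℕ}

theorem weight_one_eq_mdeg (v : Fin n →₀ ℕ) :
    Finsupp.weight (1 : Fin n → ZMod d) v = mdeg v := by
  simp [Finsupp.weight_apply, mdeg, Finsupp.sum, Nat.cast_sum]

theorem mem_comp_iff_isWeightedHomogeneous {f : MvPolynomial (Fin n) K} {i : ℕ} :
    f ∈ comp K n d i ↔ f.IsWeightedHomogeneous (1 : Fin n → ZMod d) i := by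
  simp only [IsWeightedHomogeneous, weight_one_eq_mdeg, ZMod.natCast_eq_natCast_iff']
  exact ⟨fun h v hv => h v (mem_support_iff.2 hv), fun h v hv => h (mem_support_iff.1 hv)⟩

theorem mem_veronese_iff_isWeightedHomogeneous {f : MvPolynomial (Fin n) K} :
    f ∈ veronese K n d ↔ f.IsWeightedHomogeneous (1 : Fin n → ZMod d) 0 := by
  show f ∈ comp K n d 0 ↔ _
  rw [mem_comp_iff_isWeightedHomogeneous, Nat.cast_zero]

theorem mem_comp_one_iff {f : MvPolynomial (Fin n) K} :
    f ∈ comp K n d 1 ↔ f.IsWeightedHomogeneous (1 : Fin n → ZMod d) 1 := by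
  rw [mem_comp_iff_isWeightedHomogeneous, Nat.cast_one]

theorem X_mem_comp_one (i : Fin n) : (X i : MvPolynomial (Fin n) K) ∈ comp K n d 1 :=
  mem_comp_one_iff.2 (isWeightedHomogeneous_X K _ i)

theorem pow_mem_veronese_of_mem_comp_one {f : MvPolynomial (Fin n) K} (hf : f ∈ comp K n d 1) :
    f ^ d ∈ veronese K n d := by
  rw [mem_veronese_iff_isWeightedHomogeneous, ← ZMod.natCast_self d, ← nsmul_one]
  exact (mem_comp_one_iff.1 hf).pow d

theorem derivation_mem_comp_one
    {S : Derivation K (MvPolynomial (Fin n) K) (MvPolynomial (Fin n) K)}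
    (hSX : ∀ i, S (X i) ∈ comp K n d 1) {f : MvPolynomial (Fin n) K} (hf : f ∈ comp K n d 1) :
    S f ∈ comp K n d 1 :=
  mem_comp_one_iff.2 <|
    (mem_comp_one_iff.1 hf).derivation_apply S fun i => mem_comp_one_iff.1 (hSX i)

theorem ZMod.pred_nsmul_one_add_one (hd : d ≠ 0) : (d - 1) • (1 : ZMod d) + 1 = 0 := by
  rw [nsmul_one, ← Nat.cast_add_one, Nat.sub_add_cancel (Nat.one_le_iff_ne_zero.2 hd),
    ZMod.natCast_self]

theorem X_mul_X_pow_pred_mem (hd : d ≠ 0) (i j : Fin n) :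
    (X i * X j ^ (d - 1) : MvPolynomial (Fin n) K) ∈ veronese K n d := by
  rw [mem_veronese_iff_isWeightedHomogeneous, ← ZMod.pred_nsmul_one_add_one hd, add_comm]
  exact (isWeightedHomogeneous_X K 1 i).mul ((isWeightedHomogeneous_X K 1 j).pow (d - 1))

theorem mem_comp_one_of_X_pow_pred_mul_mem (hd : d ≠ 0) {i : Fin n} {g : MvPolynomial (Fin n) K}
    (h : X i ^ (d - 1) * g ∈ veronese K n d) : g ∈ comp K n d 1 := by
  rw [mem_veronese_iff_isWeightedHomogeneous, ← ZMod.pred_nsmul_one_add_one hd] at h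
  exact mem_comp_one_iff.2 h.of_X_pow_mul

theorem monomial_pow_mem_adjoin_X_pow {v : Fin n →₀ ℕ} {r : K}
    (h : monomial v r ∈ veronese K n d) :
    (⟨monomial v r, h⟩ : veronese K n d) ^ d ∈
      Algebra.adjoin K
        (Set.range fun i ↦ (⟨X i ^ d, X_pow_mem K n d i⟩ : veronese K n d)) := by
  have hprod : (⟨monomial v r, h⟩ : veronese K n d) ^ d = algebraMap K _ (r ^ d) *
      ∏ j ∈ v.support, (⟨X j ^ d, X_pow_mem K n d j⟩ : veronese K n d) ^ v j := by
    apply Subtype.ext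
    simp only [SubmonoidClass.coe_pow, Subalgebra.coe_mul, Subalgebra.coe_algebraMap,
      SubmonoidClass.coe_finsetProd, monomial_eq, Finsupp.prod, mul_pow, map_pow, ← prod_pow]
    congr 1
    exact prod_congr rfl fun j _ => pow_right_comm _ _ _
  rw [hprod]
  exact mul_mem (Subalgebra.algebraMap_mem _ _)
    (prod_mem fun j _ => pow_mem (Algebra.subset_adjoin (Set.mem_range_self j)) _)

end Veronese

section VeroneseDerivation

variable {K : Type} [Field K] {n d : ℕ} (D : Derivation K (veronese K n d) (veronese K n d))

theorem X_pow_pred_dvd_derivation_X_pow (hn : 2 ≤ n) (hd : d ≠ 0) (i : Fin n) :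
    X i ^ (d - 1) ∣ (D ⟨X i ^ d, X_pow_mem K n d i⟩ : MvPolynomial (Fin n) K) := by
  have : Nontrivial (Fin n) := Fin.nontrivial_iff_two_le.2 hn
  obtain ⟨j, hji⟩ := exists_ne i
  set W : Fin n → veronese K n d := fun k => ⟨X k ^ d, X_pow_mem K n d k⟩
  set V : veronese K n d := ⟨X i * X j ^ (d - 1), X_mul_X_pow_pred_mem hd i j⟩
  have hrel : V ^ d = W i * W j ^ (d - 1) := Subtype.ext <| by
    simp only [SubmonoidClass.mk_pow, MulMemClass.mk_mul_mk, V, W]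
    ring
  have hD : (X j ^ d) ^ (d - 1) * (D (W i) : MvPolynomial (Fin n) K) =
      (D (V ^ d) : MvPolynomial (Fin n) K) -
        X i ^ d * (D (W j ^ (d - 1)) : MvPolynomial (Fin n) K) := by
    rw [hrel, Derivation.leibniz, eq_sub_iff_add_eq, add_comm]
    rfl
  have hDV : (D (V ^ d) : MvPolynomial (Fin n) K) =
      d • ((X i * X j ^ (d - 1)) ^ (d - 1) * (D V : MvPolynomial (Fin n) K)) := by
    rw [Derivation.leibniz_pow]
    rfl
  have hXi : ¬ X i ∣ ((X j ^ d) ^ (d - 1) : MvPolynomial (Fin n) K) := fun h =>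
    hji (X_dvd_X.1 (X_prime.dvd_of_dvd_pow (X_prime.dvd_of_dvd_pow h))).symm
  refine X_prime.pow_dvd_of_dvd_mul_left (d - 1) hXi (hD ▸ dvd_sub ?_ ?_)
  · rw [hDV, nsmul_eq_mul]
    exact ((pow_dvd_pow_of_dvd (dvd_mul_right _ _) _).mul_right _).mul_left _
  · exact (pow_dvd_pow _ (Nat.sub_le d 1)).mul_right _

variable [CharZero K]

theorem derivation_coe_eq_of_X_pow (hd : d ≠ 0)
    {S : Derivation K (MvPolynomial (Fin n) K) (MvPolynomial (Fin n) K)}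
    (hS : ∀ i, S (X i ^ d) = D ⟨X i ^ d, X_pow_mem K n d i⟩) (a : veronese K n d) :
    S a = D a := by
  let S₀ : Derivation K (veronese K n d) (MvPolynomial (Fin n) K) :=
    S.compAlgebraMap (veronese K n d)
  let D₀ : Derivation K (veronese K n d) (MvPolynomial (Fin n) K) :=
    (Algebra.linearMap (veronese K n d) (MvPolynomial (Fin n) K)).compDer D
  have hmonomial : ∀ v r (h : monomial v r ∈ veronese K n d),
      S₀ ⟨monomial v r, h⟩ = D₀ ⟨monomial v r, h⟩ :=
    fun v r h => S₀.apply_eq_of_apply_pow_eq D₀ hd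
      (Derivation.eqOn_adjoin (by rintro _ ⟨i, rfl⟩; exact hS i)
        (monomial_pow_mem_adjoin_X_pow h))
  suffices ∀ f (hf : f.IsWeightedHomogeneous (1 : Fin n → ZMod d) 0),
      S₀ ⟨f, mem_veronese_iff_isWeightedHomogeneous.2 hf⟩ =
        D₀ ⟨f, mem_veronese_iff_isWeightedHomogeneous.2 hf⟩ from
    this a (mem_veronese_iff_isWeightedHomogeneous.1 a.2)
  intro f hf
  induction hf using IsWeightedHomogeneous.induction_on with
  | zero => exact (map_zero S₀).trans (map_zero D₀).symm
  | add p q _ _ hp hq =>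
    exact (map_add S₀ _ _).trans ((congrArg₂ (· + ·) hp hq).trans (map_add D₀ _ _).symm)
  | monomial v r _ => exact hmonomial v r _

theorem derivation_nil_eq_top (hd : d ≠ 0)
    {S : Derivation K (MvPolynomial (Fin n) K) (MvPolynomial (Fin n) K)}
    (hSX : ∀ i, S (X i) ∈ comp K n d 1) (hSD : ∀ a : veronese K n d, S a = D a)
    (hD : D.nil = ⊤) : S.nil = ⊤ := by
  have hiterate : ∀ m (a : veronese K n d), S^[m] a = (D^[m] a : MvPolynomial (Fin n) K) :=
    fun m a => ((Function.Semiconj.iterate_right (f := Subtype.val) (hSD · |>.symm) m) a).symm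
  have hveronese : ∀ a : veronese K n d, (a : MvPolynomial (Fin n) K) ∈ S.nil := fun a => by
    obtain ⟨m, hm⟩ := hD ▸ Algebra.mem_top (x := a)
    exact ⟨m, by rw [hiterate, hm, ZeroMemClass.coe_zero]⟩
  have hcomp : (comp K n d 1 : Set (MvPolynomial (Fin n) K)) ⊆ S.nil := by
    refine Derivation.subset_nil_of_pow_mem_nil hd (fun f hf => ?_) (fun f hf => ?_)
    · exact derivation_mem_comp_one hSX hf
    · exact hveronese ⟨f ^ d, pow_mem_veronese_of_mem_comp_one hf⟩
  rw [eq_top_iff, ← adjoin_range_X, Algebra.adjoin_le_iff]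
  rintro _ ⟨i, rfl⟩
  exact hcomp (X_mem_comp_one i)

end VeroneseDerivation

/-- every locally nilpotent `K`-derivation of the Veronese subalgebra `A₀` is
induced by a locally nilpotent `d`-graded `K`-derivation of `A = K[x₁,…,xₙ]`. -/
theorem stmt1 (K : Type) [Field K] [CharZero K] (n d : ℕ) (hn : 2 ≤ n) (hd : 2 ≤ d)
    (D : Derivation K (veronese K n d) (veronese K n d))
    (hD : ∀ b : veronese K n d, ∃ m : ℕ, (D.toLinearMap ^ m) b = 0) :
    ∃ S : Derivation K (MvPolynomial (Fin n) K) (MvPolynomial (Fin n) K),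
      (∀ i : Fin n, S (MvPolynomial.X i) ∈ comp K n d 1) ∧
      (∀ a : veronese K n d, S ↑a = ↑(D a)) ∧
      (∀ f : MvPolynomial (Fin n) K, ∃ m : ℕ, (S.toLinearMap ^ m) f = 0) := by
  have hd₀ : d ≠ 0 := by omega
  choose g hg using X_pow_pred_dvd_derivation_X_pow D hn hd₀
  set S := mkDerivation K fun i => (d : K)⁻¹ • g i
  have hSX : ∀ i, S (X i) ∈ comp K n d 1 := fun i => by
    rw [mkDerivation_X]
    exact Submodule.smul_mem _ _ (mem_comp_one_of_X_pow_pred_mul_mem hd₀ (hg i ▸ (D _).2))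
  have hSX_pow : ∀ i, S (X i ^ d) = D ⟨X i ^ d, X_pow_mem K n d i⟩ := fun i => by
    rw [Derivation.leibniz_pow, mkDerivation_X, hg, smul_eq_mul, mul_smul_comm,
      ← Nat.cast_smul_eq_nsmul K, smul_smul, mul_inv_cancel₀ (Nat.cast_ne_zero.2 hd₀),
      one_smul]
  have hSD := derivation_coe_eq_of_X_pow D hd₀ hSX_pow
  have hSnil := derivation_nil_eq_top D hd₀ hSX hSD
    (eq_top_iff.2 fun b _ => by simpa [Derivation.mem_nil, Module.End.pow_apply] using hD b)
  refine ⟨S, hSX, hSD, fun f => ?_⟩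
  obtain ⟨m, hm⟩ := hSnil ▸ Algebra.mem_top (x := f)
  exact ⟨m, by rwa [Module.End.pow_apply]⟩
end

section
/- Let K be a field of characteristic zero, let d ≥ 2 be an integer, and let K[x] be the polynomial algebra in one variable. Then there is no K-algebra automorphism φ of K[x] with φ(x^d) = x^d + 1 (equivalently, there is no automorphism φ with φ(x)^d = x^d + 1). Consequently, the automorphism of the Veronese subalgebra K[x^d] determined by x^d ↦ x^d + 1 is not induced by any automorphism of K[x]. -/
open Polynomial

theorem separable_X_pow_add_one {K : Type*} [Field K] {d : ℕ} (hd : (d : K) ≠ 0) :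
    (X ^ d + 1 : K[X]).Separable := by
  simpa using separable_X_pow_sub_C (-1 : K) hd (by simp)

/-- `X ^ d + 1` is squarefree but not a unit, so it is not a proper power. -/
theorem pow_ne_X_pow_add_one {K : Type*} [Field K] {d : ℕ} (hd : 2 ≤ d) (hdK : (d : K) ≠ 0)
    (p : K[X]) : p ^ d ≠ X ^ d + 1 := by
  intro h
  have hsq : Squarefree (p ^ d) := h ▸ (separable_X_pow_add_one hdK).squarefree
  have hp : IsUnit p := by
    by_contra hp
    rcases hsq.eq_zero_or_one_of_pow_of_not_isUnit hp with h0 | h1 <;> omega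
  have hunit : IsUnit (X ^ d + 1 : K[X]) := h ▸ hp.pow d
  have hdeg := natDegree_eq_zero_of_isUnit hunit
  rw [← C_1, natDegree_X_pow_add_C] at hdeg
  omega

/-- over a field `K` of characteristic zero and `d ≥ 2` there is no
`K`-algebra automorphism `φ` of `K[x]` with `φ(x^d) = x^d + 1` (equivalently with
`φ(x)^d = x^d + 1`); consequently the automorphism of the Veronese subalgebra `K[x^d]`
determined by `x^d ↦ x^d + 1` is not induced by any automorphism of `K[x]`. -/
theorem stmt6 (K : Type) [Field K] [CharZero K] (d : ℕ) (hd : 2 ≤ d) :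
    (¬ ∃ φ : Polynomial K ≃ₐ[K] Polynomial K,
        φ (Polynomial.X ^ d) = Polynomial.X ^ d + 1) ∧
    (¬ ∃ φ : Polynomial K ≃ₐ[K] Polynomial K,
        (φ Polynomial.X) ^ d = Polynomial.X ^ d + 1) ∧
    (∀ α : Algebra.adjoin K {(Polynomial.X : Polynomial K) ^ d} ≃ₐ[K]
        Algebra.adjoin K {(Polynomial.X : Polynomial K) ^ d},
      ((α ⟨Polynomial.X ^ d, Algebra.subset_adjoin (Set.mem_singleton _)⟩ :
          Algebra.adjoin K {(Polynomial.X : Polynomial K) ^ d}) : Polynomial K)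
        = Polynomial.X ^ d + 1 →
      ¬ ∃ φ : Polynomial K ≃ₐ[K] Polynomial K,
          ∀ a : Algebra.adjoin K {(Polynomial.X : Polynomial K) ^ d}, φ ↑a = ↑(α a)) := by
  have not_pow (φ : K[X] ≃ₐ[K] K[X]) : φ X ^ d ≠ X ^ d + 1 :=
    pow_ne_X_pow_add_one hd (Nat.cast_ne_zero.mpr (by omega)) (φ X)
  refine ⟨fun ⟨φ, hφ⟩ => not_pow φ (by rwa [← map_pow]), fun ⟨φ, hφ⟩ => not_pow φ hφ, ?_⟩
  rintro α hα ⟨φ, hφ⟩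
  have hXd := hφ ⟨X ^ d, Algebra.subset_adjoin (Set.mem_singleton _)⟩
  rw [hα] at hXd
  exact not_pow φ (by rwa [← map_pow])
end

section
/- Let K be a field of characteristic zero and let B = K⟨x,y⟩ be the free associative algebra on two generators x, y. Then there is no K-derivation D : B → B satisfying D(x·x) = 1, D(x·y) = 0, D(y·x) = 0, and D(y·y) = 0. Consequently, the locally nilpotent derivation of the Veronese subalgebra B_0 of degree 2 (the free associative algebra on x², xy, yx, y²) determined by x² ↦ 1, xy ↦ 0, yx ↦ 0, y² ↦ 0 is not induced by any derivation of B. -/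
set_option synthInstance.maxHeartbeats 1000000
set_option maxHeartbeats 1000000

/-- The Veronese subalgebra of degree 2 of the free associative algebra `K⟨x,y⟩`:
the subalgebra generated by `x², xy, yx, y²`. -/
def B0 (K : Type) [Field K] : Subalgebra K (FreeAlgebra K (Fin 2)) :=
  Algebra.adjoin K
    ({FreeAlgebra.ι K 0 * FreeAlgebra.ι K 0, FreeAlgebra.ι K 0 * FreeAlgebra.ι K 1,
      FreeAlgebra.ι K 1 * FreeAlgebra.ι K 0, FreeAlgebra.ι K 1 * FreeAlgebra.ι K 1} :
      Set (FreeAlgebra K (Fin 2)))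

lemma xx_mem (K : Type) [Field K] : FreeAlgebra.ι K 0 * FreeAlgebra.ι K 0 ∈ B0 K :=
  Algebra.subset_adjoin (Set.mem_insert _ _)

lemma xy_mem (K : Type) [Field K] : FreeAlgebra.ι K 0 * FreeAlgebra.ι K 1 ∈ B0 K :=
  Algebra.subset_adjoin (Set.mem_insert_of_mem _ (Set.mem_insert _ _))

lemma yx_mem (K : Type) [Field K] : FreeAlgebra.ι K 1 * FreeAlgebra.ι K 0 ∈ B0 K :=
  Algebra.subset_adjoin (Set.mem_insert_of_mem _ (Set.mem_insert_of_mem _ (Set.mem_insert _ _)))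

lemma yy_mem (K : Type) [Field K] : FreeAlgebra.ι K 1 * FreeAlgebra.ι K 1 ∈ B0 K :=
  Algebra.subset_adjoin (Set.mem_insert_of_mem _ (Set.mem_insert_of_mem _
    (Set.mem_insert_of_mem _ (Set.mem_singleton _))))

/-!
The augmentation `ε : K⟨x,y⟩ → K` sending both generators to `0` is an algebra map, so for any
Leibniz map `D` we get `ε (D (x * x)) = ε (D x) * ε x + ε x * ε (D x) = 0`, whereas `ε 1 = 1`.
An extension of the derivation of `B₀` would satisfy `D (x * x) = 1`, so it cannot exist either.
-/

theorem map_leibniz_mul_eq_zero {R A F : Type*} [Semiring R] [Semiring A] [FunLike F A R]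
    [RingHomClass F A R] (ε : F) {D : A → A} (hD : ∀ u v, D (u * v) = D u * v + u * D v)
    {a b : A} (ha : ε a = 0) (hb : ε b = 0) : ε (D (a * b)) = 0 := by
  rw [hD, map_add, map_mul, map_mul, ha, hb, mul_zero, zero_mul, add_zero]

theorem FreeAlgebra.leibniz_ι_mul_ι_ne_one {R X : Type*} [CommSemiring R] [Nontrivial R]
    {D : FreeAlgebra R X → FreeAlgebra R X} (hD : ∀ u v, D (u * v) = D u * v + u * D v)
    (i j : X) : D (ι R i * ι R j) ≠ 1 := by
  intro h
  have hε : ∀ k, algebraMapInv (ι R k : FreeAlgebra R X) = 0 := fun k => by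
    simp [algebraMapInv]
  have := map_leibniz_mul_eq_zero algebraMapInv hD (hε i) (hε j)
  rw [h, map_one] at this
  exact one_ne_zero this

theorem stmt7_general (K : Type) [Field K] :
    (¬ ∃ D : FreeAlgebra K (Fin 2) →ₗ[K] FreeAlgebra K (Fin 2),
      (∀ u v : FreeAlgebra K (Fin 2), D (u * v) = D u * v + u * D v) ∧
      D (FreeAlgebra.ι K 0 * FreeAlgebra.ι K 0) = 1 ∧
      D (FreeAlgebra.ι K 0 * FreeAlgebra.ι K 1) = 0 ∧
      D (FreeAlgebra.ι K 1 * FreeAlgebra.ι K 0) = 0 ∧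
      D (FreeAlgebra.ι K 1 * FreeAlgebra.ι K 1) = 0) ∧
    (∀ D₀ : B0 K →ₗ[K] B0 K,
      (∀ u v : B0 K, D₀ (u * v) = D₀ u * v + u * D₀ v) →
      ((D₀ ⟨_, xx_mem K⟩ : B0 K) : FreeAlgebra K (Fin 2)) = 1 →
      ((D₀ ⟨_, xy_mem K⟩ : B0 K) : FreeAlgebra K (Fin 2)) = 0 →
      ((D₀ ⟨_, yx_mem K⟩ : B0 K) : FreeAlgebra K (Fin 2)) = 0 →
      ((D₀ ⟨_, yy_mem K⟩ : B0 K) : FreeAlgebra K (Fin 2)) = 0 →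
      ¬ ∃ D : FreeAlgebra K (Fin 2) →ₗ[K] FreeAlgebra K (Fin 2),
          (∀ u v : FreeAlgebra K (Fin 2), D (u * v) = D u * v + u * D v) ∧
          ∀ b : B0 K, D ↑b = ↑(D₀ b)) := by
  refine ⟨fun ⟨D, hD, hxx, _⟩ => FreeAlgebra.leibniz_ι_mul_ι_ne_one hD 0 0 hxx, ?_⟩
  rintro D₀ - hxx - - - ⟨D, hD, hextends⟩
  exact FreeAlgebra.leibniz_ι_mul_ι_ne_one hD 0 0 ((hextends ⟨_, xx_mem K⟩).trans hxx)

/-- there is no `K`-derivation `D` of the free associative algebra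
`B = K⟨x,y⟩` with `D(x²) = 1`, `D(xy) = 0`, `D(yx) = 0`, `D(y²) = 0`; consequently
the locally nilpotent derivation of the Veronese subalgebra `B₀` determined by these
values is not induced by any derivation of `B`. -/
theorem stmt7 (K : Type) [Field K] [CharZero K] :
    (¬ ∃ D : FreeAlgebra K (Fin 2) →ₗ[K] FreeAlgebra K (Fin 2),
      (∀ u v : FreeAlgebra K (Fin 2), D (u * v) = D u * v + u * D v) ∧
      D (FreeAlgebra.ι K 0 * FreeAlgebra.ι K 0) = 1 ∧
      D (FreeAlgebra.ι K 0 * FreeAlgebra.ι K 1) = 0 ∧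
      D (FreeAlgebra.ι K 1 * FreeAlgebra.ι K 0) = 0 ∧
      D (FreeAlgebra.ι K 1 * FreeAlgebra.ι K 1) = 0) ∧
    (∀ D₀ : B0 K →ₗ[K] B0 K,
      (∀ u v : B0 K, D₀ (u * v) = D₀ u * v + u * D₀ v) →
      ((D₀ ⟨_, xx_mem K⟩ : B0 K) : FreeAlgebra K (Fin 2)) = 1 →
      ((D₀ ⟨_, xy_mem K⟩ : B0 K) : FreeAlgebra K (Fin 2)) = 0 →
      ((D₀ ⟨_, yx_mem K⟩ : B0 K) : FreeAlgebra K (Fin 2)) = 0 →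
      ((D₀ ⟨_, yy_mem K⟩ : B0 K) : FreeAlgebra K (Fin 2)) = 0 →
      ¬ ∃ D : FreeAlgebra K (Fin 2) →ₗ[K] FreeAlgebra K (Fin 2),
          (∀ u v : FreeAlgebra K (Fin 2), D (u * v) = D u * v + u * D v) ∧
          ∀ b : B0 K, D ↑b = ↑(D₀ b)) :=
  stmt7_general K
end

section
/- Let K be a field of characteristic zero and let B = K⟨x,y⟩ be the free associative algebra on two generators x, y. Then there is no K-algebra automorphism φ of B satisfying φ(x·x) = x·x + 1, φ(x·y) = x·y, φ(y·x) = y·x, and φ(y·y) = y·y. Consequently, the automorphism of the Veronese subalgebra B_0 of degree 2 determined by x² ↦ x² + 1, xy ↦ xy, yx ↦ yx, y² ↦ y² is not induced by any automorphism of B. -/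
set_option synthInstance.maxHeartbeats 1000000
set_option maxHeartbeats 1000000

/-!
Map `K⟨x,y⟩` onto `K[X]` by sending both generators to `X`. If `φ(x²) = x² + 1` then
`φ(x)² = x² + 1`, so `X² + 1` would be a square in `K[X]`. It is not: when `2 ≠ 0` it is
separable, hence squarefree, so a square root of it would be a unit, while `X² + 1` has
degree `2`.
-/

open Polynomial

theorem Polynomial.not_isSquare_X_sq_sub_C {K : Type*} [Field K] (h2 : (2 : K) ≠ 0) {a : K}
    (ha : a ≠ 0) : ¬ IsSquare (X ^ 2 - C a) := by
  rintro ⟨p, hp⟩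
  have hsep : Separable (X ^ 2 - C a) := separable_X_pow_sub_C a (by exact_mod_cast h2) ha
  have hp_unit : IsUnit p := hsep.squarefree p ⟨1, by rw [mul_one, hp]⟩
  have hdeg := congrArg natDegree hp
  rw [natDegree_X_pow_sub_C, natDegree_eq_zero_of_isUnit (hp_unit.mul hp_unit)] at hdeg
  exact two_ne_zero hdeg

theorem FreeAlgebra.not_isSquare_ι_mul_self_add_one {K α : Type*} [Field K]
    (h2 : (2 : K) ≠ 0) (i : α) : ¬ IsSquare (ι K i * ι K i + 1) := by
  intro hsq
  have hsq_X : IsSquare (X ^ 2 - C (-1) : K[X]) := by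
    simpa [sq] using hsq.map (lift K fun _ => (X : K[X]))
  exact not_isSquare_X_sq_sub_C h2 (neg_ne_zero.mpr one_ne_zero) hsq_X

/-- there is no `K`-algebra automorphism `φ` of the free associative algebra
`B = K⟨x,y⟩` with `φ(x²) = x² + 1`, `φ(xy) = xy`, `φ(yx) = yx`, `φ(y²) = y²`; consequently
the automorphism of the Veronese subalgebra `B₀` determined by these values is not
induced by any automorphism of `B`. -/
theorem stmt8 (K : Type) [Field K] [CharZero K] :
    (¬ ∃ φ : FreeAlgebra K (Fin 2) ≃ₐ[K] FreeAlgebra K (Fin 2),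
      φ (FreeAlgebra.ι K 0 * FreeAlgebra.ι K 0) = FreeAlgebra.ι K 0 * FreeAlgebra.ι K 0 + 1 ∧
      φ (FreeAlgebra.ι K 0 * FreeAlgebra.ι K 1) = FreeAlgebra.ι K 0 * FreeAlgebra.ι K 1 ∧
      φ (FreeAlgebra.ι K 1 * FreeAlgebra.ι K 0) = FreeAlgebra.ι K 1 * FreeAlgebra.ι K 0 ∧
      φ (FreeAlgebra.ι K 1 * FreeAlgebra.ι K 1) = FreeAlgebra.ι K 1 * FreeAlgebra.ι K 1) ∧
    (∀ α : B0 K ≃ₐ[K] B0 K,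
      ((α ⟨_, xx_mem K⟩ : B0 K) : FreeAlgebra K (Fin 2))
        = FreeAlgebra.ι K 0 * FreeAlgebra.ι K 0 + 1 →
      ((α ⟨_, xy_mem K⟩ : B0 K) : FreeAlgebra K (Fin 2))
        = FreeAlgebra.ι K 0 * FreeAlgebra.ι K 1 →
      ((α ⟨_, yx_mem K⟩ : B0 K) : FreeAlgebra K (Fin 2))
        = FreeAlgebra.ι K 1 * FreeAlgebra.ι K 0 →
      ((α ⟨_, yy_mem K⟩ : B0 K) : FreeAlgebra K (Fin 2))
        = FreeAlgebra.ι K 1 * FreeAlgebra.ι K 1 →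
      ¬ ∃ φ : FreeAlgebra K (Fin 2) ≃ₐ[K] FreeAlgebra K (Fin 2),
          ∀ b : B0 K, φ ↑b = ↑(α b)) := by
  have no_square_root (φ : FreeAlgebra K (Fin 2) →ₐ[K] FreeAlgebra K (Fin 2))
      (hxx : φ (FreeAlgebra.ι K 0 * FreeAlgebra.ι K 0) =
        FreeAlgebra.ι K 0 * FreeAlgebra.ι K 0 + 1) : False :=
    FreeAlgebra.not_isSquare_ι_mul_self_add_one two_ne_zero 0
      ⟨φ (FreeAlgebra.ι K 0), by rw [← hxx, map_mul]⟩
  refine ⟨fun ⟨φ, hxx, _⟩ => no_square_root φ hxx, ?_⟩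
  rintro α hxx - - - ⟨φ, hφ⟩
  exact no_square_root φ ((hφ ⟨_, xx_mem K⟩).trans hxx)
end

section
/- Let K be a field containing a primitive d-th root of unity ε (where d ≥ 2 and the characteristic of K is zero or does not divide d), let n ≥ 1, and let A = K[x_1,…,x_n] with the Z_d-grading A = A_0 ⊕ … ⊕ A_{d-1}. Let ε̂ be the K-algebra automorphism of A with ε̂(x_i) = ε x_i for all i. If f_1, f_2 ∈ A are nonzero coprime polynomials such that f_1 · ε̂(f_2) = ε̂(f_1) · f_2 (equivalently, the rational function f_2/f_1 is fixed by ε̂), then each of f_1 and f_2 is d-homogeneous; that is, there exist residues i, j ∈ Z_d such that f_1 ∈ A_i and f_2 ∈ A_j. -/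
set_option synthInstance.maxHeartbeats 1000000
set_option maxHeartbeats 1000000

open MvPolynomial

/-! Coprimality turns `f₁ · ε̂(f₂) = ε̂(f₁) · f₂` into `f₁ ∣ ε̂(f₁)`, and the same argument for
`ε̂⁻¹` gives `ε̂(f₁) ∣ f₁`. So `ε̂(f₁) = c · f₁` for a unit, hence a constant, `c`. As `ε̂`
multiplies the coefficient of `x^m` by `ε ^ |m|`, every monomial of `f₁` satisfies `ε ^ |m| = c`,
and since `ε` is a primitive `d`-th root of unity this fixes `|m|` modulo `d`. Likewise for `f₂`. -/

theorem IsRelPrime.associated_map_of_mul_map_eq {α : Type*} [CommMonoidWithZero α]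
    [IsLeftCancelMulZero α] [DecompositionMonoid α] (σ : α ≃* α) {a b : α} (hab : IsRelPrime a b)
    (h : a * σ b = σ a * b) : Associated a (σ a) := by
  have dvd_map : ∀ τ : α ≃* α, a * τ b = τ a * b → a ∣ τ a := fun τ hτ =>
    hab.dvd_of_dvd_mul_right ⟨τ b, hτ.symm⟩
  have h_symm : a * σ.symm b = σ.symm a * b := by
    simpa using (congrArg σ.symm h).symm
  exact associated_of_dvd_dvd (dvd_map σ h) (by simpa using map_dvd σ (dvd_map σ.symm h_symm))

namespace MvPolynomial

theorem aeval_C_mul_X_monomial {σ R : Type*} [CommSemiring R] (ε : R) (m : σ →₀ ℕ) (a : R) :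
    aeval (fun i => C ε * X i) (monomial m a) = monomial m (ε ^ m.degree * a) := by
  classical
  rw [aeval_monomial, Finsupp.prod]
  simp only [mul_pow, Finset.prod_mul_distrib, ← map_pow, ← map_prod, Finset.prod_pow_eq_pow_sum]
  rw [monomial_eq, Finsupp.degree_apply, C_mul, Finsupp.prod, algebraMap_eq]
  ring

theorem coeff_apply_of_apply_X_eq_C_mul_X {σ R : Type*} [CommSemiring R]
    (φ : MvPolynomial σ R →ₐ[R] MvPolynomial σ R) (ε : R) (hφ : ∀ i, φ (X i) = C ε * X i)
    (f : MvPolynomial σ R) (m : σ →₀ ℕ) : coeff m (φ f) = ε ^ m.degree * coeff m f := by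
  classical
  obtain rfl : φ = aeval (fun i => C ε * X i) := algHom_ext fun i => by rw [hφ, aeval_X]
  induction f using induction_on' with
  | monomial m' a =>
    rw [aeval_C_mul_X_monomial, coeff_monomial, coeff_monomial]
    split_ifs with h
    · rw [h]
    · rw [mul_zero]
  | add p q hp hq => simp only [map_add, coeff_add, hp, hq, mul_add]

end MvPolynomial

theorem mem_comp_of_pow_mdeg_eq {K : Type} [Field K] {n d : ℕ} {ε : K} (hε : IsPrimitiveRoot ε d)
    (hd : d ≠ 0) {f : MvPolynomial (Fin n) K} {i : ℕ} (h : ∀ m ∈ f.support, ε ^ mdeg m = ε ^ i) :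
    f ∈ comp K n d i := fun m hm => by
  rw [hε.eq_orderOf]
  exact (hε.isOfFinOrder hd).pow_inj_mod.mp (h m hm)

theorem exists_mem_comp_of_associated_map {K : Type} [Field K] {n d : ℕ} {ε : K}
    (hε : IsPrimitiveRoot ε d) (hd : 0 < d)
    (φ : MvPolynomial (Fin n) K →ₐ[K] MvPolynomial (Fin n) K) (hφ : ∀ i, φ (X i) = C ε * X i)
    {f : MvPolynomial (Fin n) K} (hf : f ≠ 0) (h : Associated f (φ f)) :
    ∃ i < d, f ∈ comp K n d i := by
  obtain ⟨u, hu⟩ := h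
  obtain ⟨c, -, hc⟩ := isUnit_iff_eq_C_of_isReduced.mp u.isUnit
  have h_pow_eq : ∀ m ∈ f.support, ε ^ mdeg m = c := fun m hm => by
    have := coeff_apply_of_apply_X_eq_C_mul_X φ ε hφ f m
    rw [← hu, hc, mul_comm, coeff_C_mul] at this
    exact mul_right_cancel₀ (mem_support_iff.mp hm) this.symm
  obtain ⟨m₀, hm₀⟩ := support_nonempty.mpr hf
  refine ⟨mdeg m₀ % d, Nat.mod_lt _ hd, mem_comp_of_pow_mdeg_eq hε hd.ne' fun m hm => ?_⟩
  rw [h_pow_eq m hm, ← h_pow_eq m₀ hm₀, hε.eq_orderOf, pow_mod_orderOf]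

theorem stmt10_general (K : Type) [Field K] (n d : ℕ) (hd : 2 ≤ d)
    (ε : K) (hε1 : ε ^ d = 1) (hε2 : ∀ k : ℕ, 0 < k → k < d → ε ^ k ≠ 1)
    (εhat : MvPolynomial (Fin n) K ≃ₐ[K] MvPolynomial (Fin n) K)
    (hεhat : ∀ i : Fin n, εhat (MvPolynomial.X i) = MvPolynomial.C ε * MvPolynomial.X i)
    (f₁ f₂ : MvPolynomial (Fin n) K) (hf₁ : f₁ ≠ 0) (hf₂ : f₂ ≠ 0)
    (hcop : ∀ g : MvPolynomial (Fin n) K, g ∣ f₁ → g ∣ f₂ → IsUnit g)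
    (heq : f₁ * εhat f₂ = εhat f₁ * f₂) :
    ∃ i < d, ∃ j < d, f₁ ∈ comp K n d i ∧ f₂ ∈ comp K n d j := by
  have hd₀ : 0 < d := by omega
  have hε : IsPrimitiveRoot ε d := .mk_of_lt ε hd₀ hε1 hε2
  have hrel : IsRelPrime f₁ f₂ := hcop
  have h₁ : Associated f₁ (εhat f₁) :=
    hrel.associated_map_of_mul_map_eq εhat.toMulEquiv heq
  have heq' : f₂ * εhat f₁ = εhat f₂ * f₁ := by rw [mul_comm, ← heq, mul_comm]
  have h₂ : Associated f₂ (εhat f₂) :=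
    hrel.symm.associated_map_of_mul_map_eq εhat.toMulEquiv heq'
  obtain ⟨i, hi, hf₁i⟩ := exists_mem_comp_of_associated_map hε hd₀ εhat.toAlgHom hεhat hf₁ h₁
  obtain ⟨j, hj, hf₂j⟩ := exists_mem_comp_of_associated_map hε hd₀ εhat.toAlgHom hεhat hf₂ h₂
  exact ⟨i, hi, j, hj, hf₁i, hf₂j⟩

/-- if nonzero coprime `f₁, f₂` satisfy `f₁ · ε̂(f₂) = ε̂(f₁) · f₂` (i.e.
`f₂/f₁` is fixed by `ε̂`), then `f₁` and `f₂` are `d`-homogeneous. -/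
theorem stmt10 (K : Type) [Field K] (n d : ℕ) (hn : 1 ≤ n) (hd : 2 ≤ d)
    (ε : K) (hε1 : ε ^ d = 1) (hε2 : ∀ k : ℕ, 0 < k → k < d → ε ^ k ≠ 1)
    (hchar : ringChar K = 0 ∨ ¬ ringChar K ∣ d)
    (εhat : MvPolynomial (Fin n) K ≃ₐ[K] MvPolynomial (Fin n) K)
    (hεhat : ∀ i : Fin n, εhat (MvPolynomial.X i) = MvPolynomial.C ε * MvPolynomial.X i)
    (f₁ f₂ : MvPolynomial (Fin n) K) (hf₁ : f₁ ≠ 0) (hf₂ : f₂ ≠ 0)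
    (hcop : ∀ g : MvPolynomial (Fin n) K, g ∣ f₁ → g ∣ f₂ → IsUnit g)
    (heq : f₁ * εhat f₂ = εhat f₁ * f₂) :
    ∃ i < d, ∃ j < d, f₁ ∈ comp K n d i ∧ f₂ ∈ comp K n d j :=
  stmt10_general K n d hd ε hε1 hε2 εhat hεhat f₁ f₂ hf₁ hf₂ hcop heq
end

section
/- Let K be a field, let d ≥ 2 and n ≥ 1 be integers, let A = K[x_1,…,x_n], and let A_0 be the Veronese subalgebra of A of degree d. Then x_1^d is an irreducible element of the ring A_0. -/
/-!
Every monomial of an element of `A₀` has degree divisible by `d`, hence so has its total degree.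
Total degree is additive on products in `A`, so a factorisation of an element of total degree `d`
in `A₀` has a factor of total degree `0`: a nonzero constant, which is a unit of `A₀`.
-/

set_option synthInstance.maxHeartbeats 1000000
set_option maxHeartbeats 1000000

open MvPolynomial

namespace veronese

variable {K : Type} [Field K] {n d : ℕ}

lemma dvd_totalDegree_of_mem {f : MvPolynomial (Fin n) K} (hf : f ∈ veronese K n d) :
    d ∣ f.totalDegree := by
  rcases eq_or_ne f 0 with rfl | hf0
  · simp
  obtain ⟨m, hm, hdeg⟩ := Finset.exists_mem_eq_sup f.support (support_nonempty.mpr hf0)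
    fun m => m.sum fun _ k => k
  rw [totalDegree, hdeg]
  exact Nat.dvd_of_mod_eq_zero ((hf m hm).trans (Nat.zero_mod d))

lemma isUnit_of_totalDegree_eq_zero {a : veronese K n d} (ha : a ≠ 0)
    (h : (a : MvPolynomial (Fin n) K).totalDegree = 0) : IsUnit a := by
  have ha_eq : a = algebraMap K (veronese K n d) ((a : MvPolynomial (Fin n) K).coeff 0) :=
    Subtype.ext (totalDegree_eq_zero_iff_eq_C.mp h)
  have hc : (a : MvPolynomial (Fin n) K).coeff 0 ≠ 0 := fun hc =>
    ha (by rw [ha_eq, hc, map_zero])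
  rw [ha_eq]
  exact (IsUnit.mk0 _ hc).map _

theorem irreducible_of_totalDegree_eq (hd : 0 < d) {f : veronese K n d}
    (hf : (f : MvPolynomial (Fin n) K).totalDegree = d) : Irreducible f := by
  refine ⟨fun hu => ?_, fun a b hab => ?_⟩
  · have : (f : MvPolynomial (Fin n) K).totalDegree = 0 :=
      (isUnit_iff_totalDegree_of_isReduced.mp (hu.map (veronese K n d).val)).2
    omega
  have hf0 : f ≠ 0 := by rintro rfl; simp at hf; omega
  have ha : a ≠ 0 := by rintro rfl; simp [hab] at hf0
  have hb : b ≠ 0 := by rintro rfl; simp [hab] at hf0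
  have hdeg : (a : MvPolynomial (Fin n) K).totalDegree
      + (b : MvPolynomial (Fin n) K).totalDegree = d := by
    rw [← totalDegree_mul_of_isDomain (by exact_mod_cast ha) (by exact_mod_cast hb),
      ← Subalgebra.coe_mul, ← hab, hf]
  by_cases hlt : (a : MvPolynomial (Fin n) K).totalDegree < d
  · exact .inl (isUnit_of_totalDegree_eq_zero ha
      (Nat.eq_zero_of_dvd_of_lt (dvd_totalDegree_of_mem a.2) hlt))
  · exact .inr (isUnit_of_totalDegree_eq_zero hb (by omega))

end veronese

/-- `x₁^d` is irreducible in the Veronese subalgebra `A₀`. -/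
theorem stmt11 (K : Type) [Field K] (n d : ℕ) (hn : 1 ≤ n) (hd : 2 ≤ d) :
    Irreducible (⟨(MvPolynomial.X (⟨0, by omega⟩ : Fin n) : MvPolynomial (Fin n) K) ^ d,
      X_pow_mem K n d _⟩ : veronese K n d) :=
  veronese.irreducible_of_totalDegree_eq (by omega) (totalDegree_X_pow _ _)
end
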